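/- Let X be a locally finite, infinite, connected graph with basepoint b and divergence function D(n) = Div_{X,γ,δ}(n) for some constants 0 < δ < 1 and γ ≥ 0, and let f be a Floyd function satisfying limsup_{n→∞} ( D(2n) · f(⌊δn − γ⌋) ) = 0. Then for every ε > 0 there exists N such that for all vertices x, y of X with d(b,x) > N and d(b,y) > N, the Floyd distance satisfies d_f(x,y) < ε. -/
import Mathlib


open Filter
open scoped ENNReal

universe u

namespace FloydPaper

/-- A **Floyd function**: `f : {1,2,...} → (0,∞)` (modelled as `f : ℕ → ℝ` with `f 0 := f 1`)
such that there is `K ≥ 1` with `1 ≤ f n / f (n+1) ≤ K` for all `n ≥ 1`, and `∑ f n < ∞`. -/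
structure IsFloydFunction (f : ℕ → ℝ) : Prop where
  pos : ∀ n : ℕ, 0 < f n
  zero_eq : f 0 = f 1
  ratio : ∃ K : ℝ, 1 ≤ K ∧ ∀ n : ℕ, 1 ≤ n → 1 ≤ f n / f (n + 1) ∧ f n / f (n + 1) ≤ K
  summable : Summable fun n : ℕ => f (n + 1)

variable {V : Type u}

/-- The Floyd length of an (oriented) edge: `f` applied to the graph distance from the
basepoint `b` to the nearer endpoint of the edge. -/
noncomputable def edgeFloydLength (G : SimpleGraph V) (f : ℕ → ℝ) (b : V) (e : G.Dart) : ℝ :=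
  f (min (G.dist b e.toProd.1) (G.dist b e.toProd.2))

/-- The Floyd length of an edge path (walk): the sum of the Floyd lengths of its edges. -/
noncomputable def floydLength (G : SimpleGraph V) (f : ℕ → ℝ) (b : V) {u v : V}
    (p : G.Walk u v) : ℝ :=
  (p.darts.map (edgeFloydLength G f b)).sum

/-- The Floyd distance between two vertices: the infimum of the Floyd lengths of edge paths
joining them. -/
noncomputable def floydDist (G : SimpleGraph V) (f : ℕ → ℝ) (b : V) (u v : V) : ℝ :=
  sInf {L : ℝ | ∃ p : G.Walk u v, floydLength G f b p = L}

/-- An edge path `p` is a `C`-quasi-geodesic if for all vertices `v, v'` on `p`,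
`(1/C) d(v,v') - C ≤ |p(v,v')| ≤ C d(v,v') + C`, where `|p(v,v')|` is the number of edges of
the subpath of `p` between them. -/
def IsQuasiGeodesicWalk (G : SimpleGraph V) (C : ℝ) {u v : V} (p : G.Walk u v) : Prop :=
  ∀ i j : ℕ, i ≤ j → j ≤ p.length →
    (1 / C) * (G.dist (p.getVert i) (p.getVert j) : ℝ) - C ≤ ((j : ℝ) - (i : ℝ)) ∧
      ((j : ℝ) - (i : ℝ)) ≤ C * (G.dist (p.getVert i) (p.getVert j) : ℝ) + C

/-- A sequence of vertices escapes to infinity if it eventually leaves every ball about the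
basepoint. -/
def Escapes (G : SimpleGraph V) (b : V) (s : ℕ → V) : Prop :=
  ∀ n : ℕ, ∃ N : ℕ, ∀ m : ℕ, N ≤ m → n < G.dist b (s m)

/-- A sequence of vertices is Cauchy for the Floyd distance. -/
def IsFloydCauchy (G : SimpleGraph V) (f : ℕ → ℝ) (b : V) (s : ℕ → V) : Prop :=
  ∀ ε : ℝ, 0 < ε → ∃ N : ℕ, ∀ m n : ℕ, N ≤ m → N ≤ n →
    floydDist G f b (s m) (s n) < ε

/-- The sequences representing points of the Floyd boundary: Floyd-Cauchy sequences escaping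
to infinity (for an infinite, connected, locally finite graph these are exactly the Cauchy
sequences with no limit in the vertex set, since vertices are isolated in the Floyd metric). -/
def BoundarySeq (G : SimpleGraph V) (f : ℕ → ℝ) (b : V) : Type u :=
  {s : ℕ → V // IsFloydCauchy G f b s ∧ Escapes G b s}

/-- Two boundary sequences represent the same boundary point iff the Floyd distance between
them tends to `0`. -/
def BoundaryRel (G : SimpleGraph V) (f : ℕ → ℝ) (b : V)
    (s t : BoundarySeq G f b) : Prop :=
  Tendsto (fun n => floydDist G f b (s.1 n) (t.1 n)) atTop (nhds 0)

/-- The Floyd boundary `∂_f X`: the set of points of the Cauchy completion of the vertex set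
with the Floyd metric which do not lie in the vertex set. -/
def FloydBoundary (G : SimpleGraph V) (f : ℕ → ℝ) (b : V) : Type u :=
  Quot (BoundaryRel G f b)

/-- The Floyd boundary consists of exactly one point. -/
def FloydBoundaryOnePoint (G : SimpleGraph V) (f : ℕ → ℝ) (b : V) : Prop :=
  ∃ p : FloydBoundary G f b, ∀ q : FloydBoundary G f b, q = p

/-- The Floyd boundary is trivial: it has at most two points. -/
def FloydBoundaryTrivial (G : SimpleGraph V) (f : ℕ → ℝ) (b : V) : Prop :=
  ∀ p q r : FloydBoundary G f b, p = q ∨ p = r ∨ q = r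

/-- The divergence function `Div_{X,γ,δ}(n)` of a graph: the sup over triples `x, y, c` of
vertices with `r := d(c,{x,y}) > 0` and `d(x,y) ≤ n` of the infimum of the lengths of edge
paths from `x` to `y` avoiding the ball of radius `δr - γ` about `c` (`∞` if none exists). -/
noncomputable def graphDivergence (G : SimpleGraph V) (γ δ : ℝ) (n : ℕ) : ℝ≥0∞ :=
  ⨆ x : V, ⨆ y : V, ⨆ c : V,
    ⨆ _ : 0 < min (G.dist c x) (G.dist c y) ∧ G.dist x y ≤ n,
      ⨅ p : {p : G.Walk x y // ∀ z ∈ p.support,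
          δ * (↑(min (G.dist c x) (G.dist c y)) : ℝ) - γ < (G.dist c z : ℝ)},
        (p.1.length : ℝ≥0∞)

/-- `α : ℝ → X` is a (bi-infinite) `C`-quasi-geodesic for the distance function `d`. -/
def IsQuasiGeodesicMap {X : Type u} (d : X → X → ℝ) (C : ℝ) (α : ℝ → X) : Prop :=
  ∀ s t : ℝ, (1 / C) * |s - t| - C ≤ d (α s) (α t) ∧ d (α s) (α t) ≤ C * |s - t| + C

/-- `α : [0,∞) → X` is a `C`-quasi-geodesic ray for the distance function `d`. -/
def IsQuasiGeodesicRay {X : Type u} (d : X → X → ℝ) (C : ℝ) (α : ℝ → X) : Prop :=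
  ∀ s t : ℝ, 0 ≤ s → 0 ≤ t →
    (1 / C) * |s - t| - C ≤ d (α s) (α t) ∧ d (α s) (α t) ≤ C * |s - t| + C

/-- The length of a discrete path (chain) in a space with distance function `d`. -/
noncomputable def chainLength {X : Type u} (d : X → X → ℝ) (p : List X) : ℝ :=
  ((p.zip p.tail).map fun q => d q.1 q.2).sum

/-- The divergence function of a metric space (with distance function `d`), where paths are
taken to be discrete paths with steps of size at most `1` (for a graph these correspond to
edge paths). -/
noncomputable def divergence {X : Type u} (d : X → X → ℝ) (γ δ : ℝ) (n : ℕ) : ℝ≥0∞ :=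
  ⨆ x : X, ⨆ y : X, ⨆ c : X,
    ⨆ _ : 0 < min (d c x) (d c y) ∧ d x y ≤ (n : ℝ),
      ⨅ p : {p : List X // p.Chain' (fun w z => d w z ≤ 1) ∧ p.head? = some x ∧
          p.getLast? = some y ∧ ∀ z ∈ p, δ * min (d c x) (d c y) - γ < d c z},
        ENNReal.ofReal (chainLength d p.1)

/-- A space is `C`-wide if every point is within `C` of a bi-infinite `C`-quasi-geodesic and
its divergence is bounded above by a linear function for some `0 < δ < 1`, `γ ≥ 0`. -/
def IsWide (X : Type u) (d : X → X → ℝ) (C : ℝ) : Prop :=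
  (∀ x : X, ∃ α : ℝ → X, IsQuasiGeodesicMap d C α ∧ ∃ t : ℝ, d x (α t) ≤ C) ∧
  ∃ δ γ : ℝ, 0 < δ ∧ δ < 1 ∧ 0 ≤ γ ∧
    ∃ A B : ℝ, ∀ n : ℕ, divergence d γ δ n ≤ ENNReal.ofReal (A * n + B)

/-- The induced distance function on a subset. -/
def restrictDist {X : Type u} (d : X → X → ℝ) (Y : Set X) : ↥Y → ↥Y → ℝ :=
  fun a b => d a b

/-- A subset has infinite diameter. -/
def InfiniteDiam {X : Type u} (d : X → X → ℝ) (S : Set X) : Prop :=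
  ∀ M : ℝ, ∃ x ∈ S, ∃ y ∈ S, M < d x y

/-- `X` is `C`-thick of order at most `k`: thick of order `0` means wide, and thick of order
at most `k+1` means there is a collection `𝒴` of subsets whose `C`-neighborhoods cover `X`,
each of which is `C`-thick of order at most `k` in the induced metric, and any two of which
are connected by a finite chain of members of `𝒴` with consecutive ones having
infinite-diameter intersection `N_C(Y_i) ∩ Y_{i+1}`. -/
def IsThickLE : ℕ → (X : Type u) → (X → X → ℝ) → ℝ → Prop
  | 0, X, d, C => IsWide X d C
  | k + 1, X, d, C =>
      ∃ 𝒴 : Set (Set X),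
        (∀ x : X, ∃ Y ∈ 𝒴, ∃ y ∈ Y, d x y ≤ C) ∧
        (∀ Y ∈ 𝒴, IsThickLE k ↥Y (restrictDist d Y) C) ∧
        ∀ Y ∈ 𝒴, ∀ Y' ∈ 𝒴, ∃ m : ℕ, ∃ c : Fin (m + 1) → Set X,
          (∀ i, c i ∈ 𝒴) ∧ c 0 = Y ∧ c (Fin.last m) = Y' ∧
          ∀ i : Fin m, InfiniteDiam d
            ({x : X | ∃ y ∈ c i.castSucc, d x y ≤ C} ∩ c i.succ)

/-- `X` is `C`-thick of order at most `k ≥ 1` **with respect to** the collection `𝒴`. -/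
def IsThickCollection (X : Type u) (d : X → X → ℝ) (C : ℝ) (k : ℕ) (𝒴 : Set (Set X)) : Prop :=
  (∀ x : X, ∃ Y ∈ 𝒴, ∃ y ∈ Y, d x y ≤ C) ∧
  (∀ Y ∈ 𝒴, IsThickLE (k - 1) ↥Y (restrictDist d Y) C) ∧
  ∀ Y ∈ 𝒴, ∀ Y' ∈ 𝒴, ∃ m : ℕ, ∃ c : Fin (m + 1) → Set X,
    (∀ i, c i ∈ 𝒴) ∧ c 0 = Y ∧ c (Fin.last m) = Y' ∧
    ∀ i : Fin m, InfiniteDiam d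
      ({x : X | ∃ y ∈ c i.castSucc, d x y ≤ C} ∩ c i.succ)

/-- The path metric of a graph, as a real-valued distance function on the vertices. -/
noncomputable def graphDist (G : SimpleGraph V) : V → V → ℝ :=
  fun x y => (G.dist x y : ℝ)

/-- The Cayley graph of a group with respect to a generating set `S`: vertices are group
elements, with an edge joining `g` and `g * s` for each `g` and each `s ∈ S \ {1}`. -/
def cayleyGraph (Γ : Type u) [Group Γ] (S : Set Γ) : SimpleGraph Γ :=
  SimpleGraph.fromRel fun g h => ∃ s ∈ S, h = g * s


section AuxLemmas

lemma IsFloydFunction.antitone' {f : ℕ → ℝ} (hf : IsFloydFunction f) : Antitone f := by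
  apply antitone_nat_of_succ_le
  intro n
  cases n with
  | zero => exact hf.zero_eq.ge
  | succ k =>
    obtain ⟨K, hK1, hK⟩ := hf.ratio
    have h := (hK (k + 1) (Nat.succ_le_succ (Nat.zero_le k))).1
    have hp := hf.pos (k + 2)
    rw [le_div_iff₀ hp] at h
    linarith

lemma floydLength_nonneg {G : SimpleGraph V} {f : ℕ → ℝ} (hpos : ∀ n, 0 < f n) (b : V)
    {u v : V} (p : G.Walk u v) : 0 ≤ floydLength G f b p := by
  apply List.sum_nonneg
  intro a ha
  obtain ⟨d, _, rfl⟩ := List.mem_map.mp ha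
  exact (hpos _).le

lemma floydDist_le_floydLength {G : SimpleGraph V} {f : ℕ → ℝ} (hpos : ∀ n, 0 < f n) (b : V)
    {u v : V} (p : G.Walk u v) : floydDist G f b u v ≤ floydLength G f b p :=
  csInf_le ⟨0, by rintro L ⟨q, rfl⟩; exact floydLength_nonneg hpos b q⟩ ⟨p, rfl⟩

lemma floydLength_append {G : SimpleGraph V} {f : ℕ → ℝ} (b : V) {u v w : V}
    (p : G.Walk u v) (q : G.Walk v w) :
    floydLength G f b (p.append q) = floydLength G f b p + floydLength G f b q := by
  simp [floydLength, SimpleGraph.Walk.darts_append]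

lemma floydLength_reverse {G : SimpleGraph V} {f : ℕ → ℝ} (b : V) {u v : V} (p : G.Walk u v) :
    floydLength G f b p.reverse = floydLength G f b p := by
  simp only [floydLength, SimpleGraph.Walk.darts_reverse, List.map_reverse, List.sum_reverse,
    List.map_map]
  congr 1
  ext d
  simp [edgeFloydLength, SimpleGraph.Dart.symm, min_comm]

lemma floydDist_comm {G : SimpleGraph V} {f : ℕ → ℝ} (b : V) (u v : V) :
    floydDist G f b u v = floydDist G f b v u := by
  unfold floydDist
  congr 1
  ext L
  constructor
  · rintro ⟨p, rfl⟩; exact ⟨p.reverse, floydLength_reverse b p⟩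
  · rintro ⟨p, rfl⟩; exact ⟨p.reverse, floydLength_reverse b p⟩

lemma exists_adj_pred {G : SimpleGraph V} (hconn : G.Connected) (b y : V) {k : ℕ}
    (hy : G.dist b y = k + 1) : ∃ z : V, G.Adj z y ∧ G.dist b z = k := by
  obtain ⟨p, hp⟩ := hconn.exists_walk_length_eq_dist b y
  have hyb : y ≠ b := by rintro rfl; rw [SimpleGraph.dist_self] at hy; omega
  obtain ⟨z, h, q, hq⟩ := SimpleGraph.Walk.exists_eq_cons_of_ne hyb p.reverse
  have hql : q.length = k := by
    have h1 := congrArg SimpleGraph.Walk.length hq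
    rw [SimpleGraph.Walk.length_reverse, hp, hy, SimpleGraph.Walk.length_cons] at h1
    omega
  refine ⟨z, h.symm, ?_⟩
  have h1 : G.dist b z ≤ k := by
    have := SimpleGraph.dist_le q.reverse
    rwa [SimpleGraph.Walk.length_reverse, hql] at this
  have h2 : G.dist b y ≤ G.dist b z + G.dist z y := hconn.dist_triangle
  have h3 : G.dist z y ≤ 1 := SimpleGraph.dist_le h.symm.toWalk
  omega

lemma exists_walk_down (G : SimpleGraph V) (hconn : G.Connected) (f : ℕ → ℝ)
    (hpos : ∀ n, 0 < f n) (b : V) (m : ℕ) :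
    ∀ n : ℕ, ∀ y : V, G.dist b y = n → m ≤ n →
    ∃ (y' : V) (w : G.Walk y' y), G.dist b y' = m ∧
      floydLength G f b w ≤ ∑ k ∈ Finset.Ico m n, f k := by
  intro n
  induction n with
  | zero =>
    intro y hy hm
    obtain rfl : m = 0 := Nat.le_zero.mp hm
    exact ⟨y, SimpleGraph.Walk.nil, hy, by simp [floydLength]⟩
  | succ k ih =>
    intro y hy hm
    rcases eq_or_lt_of_le hm with rfl | hmk
    · exact ⟨y, SimpleGraph.Walk.nil, hy, by
        simp only [floydLength, SimpleGraph.Walk.darts_nil, List.map_nil, List.sum_nil]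
        exact Finset.sum_nonneg fun i _ => (hpos i).le⟩
    · obtain ⟨z, hadj, hz⟩ := exists_adj_pred hconn b y hy
      obtain ⟨y', w, hy', hw⟩ := ih z hz (Nat.lt_succ_iff.mp hmk)
      refine ⟨y', w.append hadj.toWalk, hy', ?_⟩
      rw [floydLength_append]
      have hlast : floydLength G f b hadj.toWalk = f k := by
        simp only [floydLength, SimpleGraph.Adj.toWalk, SimpleGraph.Walk.darts_cons,
          SimpleGraph.Walk.darts_nil, List.map_cons, List.map_nil, List.sum_cons, List.sum_nil,
          add_zero, edgeFloydLength]
        rw [hz, hy]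
        congr 1
        omega
      rw [hlast, Finset.sum_Ico_succ_top (Nat.lt_succ_iff.mp hmk)]
      linarith

end AuxLemmas

/-- Let `X` be a locally finite, infinite, connected graph with basepoint `b` and divergence
function `D(n) = Div_{X,γ,δ}(n)` for some `0 < δ < 1`, `γ ≥ 0`, and let `f` be a Floyd
function with `limsup_{n → ∞} D(2n) · f(⌊δn - γ⌋) = 0`. Then for every `ε > 0` there exists
`N` such that any two vertices at graph distance more than `N` from `b` are at Floyd distance
less than `ε` from each other. -/
theorem floyd_dist_eventually_small_of_divergence
    {V : Type u} (G : SimpleGraph V) (hinf : Infinite V) (hconn : G.Connected)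
    (hlf : ∀ v : V, (G.neighborSet v).Finite) (b : V)
    (γ δ : ℝ) (hδ0 : 0 < δ) (hδ1 : δ < 1) (hγ : 0 ≤ γ)
    (f : ℕ → ℝ) (hf : IsFloydFunction f)
    (hlim : Filter.limsup
      (fun n : ℕ => graphDivergence G γ δ (2 * n) *
        ENNReal.ofReal (f (Int.toNat ⌊δ * (n : ℝ) - γ⌋))) Filter.atTop = 0)
    (ε : ℝ) (hε : 0 < ε) :
    ∃ N : ℕ, ∀ x y : V, N < G.dist b x → N < G.dist b y →
      floydDist G f b x y < ε := by
  classical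
  have hpos := hf.pos
  have hmono := hf.antitone'
  have hsum : Summable f := (summable_nat_add_iff 1).mp hf.summable
  have htail : Tendsto (fun i => ∑' k, f (k + i)) atTop (nhds 0) := tendsto_sum_nat_add f
  have hev2 : ∀ᶠ i in atTop, ∑' k, f (k + i) < ε / 2 :=
    htail.eventually (gt_mem_nhds (half_pos hε))
  obtain ⟨N2, hN2⟩ := eventually_atTop.mp hev2
  have hev1 : ∀ᶠ n in atTop, graphDivergence G γ δ (2 * n) *
      ENNReal.ofReal (f (Int.toNat ⌊δ * (n : ℝ) - γ⌋)) < ENNReal.ofReal (ε / 2) := by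
    apply Filter.eventually_lt_of_limsup_lt
    · rw [hlim]; exact ENNReal.ofReal_pos.mpr (half_pos hε)
    · exact Filter.isBoundedUnder_of ⟨⊤, fun _ => le_top⟩
  obtain ⟨N1, hN1⟩ := eventually_atTop.mp hev1
  refine ⟨max N1 N2, ?_⟩
  have key : ∀ x y : V, max N1 N2 < G.dist b x → max N1 N2 < G.dist b y →
      G.dist b x ≤ G.dist b y → floydDist G f b x y < ε := by
    intro x y hx hy hxy
    set m := G.dist b x with hm
    obtain ⟨y', w, hy', hw⟩ := exists_walk_down G hconn f hpos b m (G.dist b y) y rfl hxy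
    have hwε : floydLength G f b w < ε / 2 := by
      have h1 : ∑ k ∈ Finset.Ico m (G.dist b y), f k ≤ ∑' k, f (k + m) := by
        rw [Finset.sum_Ico_eq_sum_range]
        have hsm : Summable fun k => f (k + m) := (summable_nat_add_iff m).mpr hsum
        calc ∑ i ∈ Finset.range (G.dist b y - m), f (m + i)
            = ∑ i ∈ Finset.range (G.dist b y - m), f (i + m) := by simp_rw [add_comm]
          _ ≤ ∑' k, f (k + m) := Summable.sum_le_tsum _ (fun i _ => (hpos _).le) hsm
      have h2 := hN2 m (le_of_lt (lt_of_le_of_lt (le_max_right N1 N2) hx))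
      linarith
    have hmin : min (G.dist b x) (G.dist b y') = m := by rw [hy', ← hm, min_self]
    have hm1 : N1 ≤ m := le_of_lt (lt_of_le_of_lt (le_max_left N1 N2) hx)
    have hr : 0 < min (G.dist b x) (G.dist b y') ∧ G.dist x y' ≤ 2 * m := by
      constructor
      · rw [hmin]; omega
      · have h3 := hconn.dist_triangle (u := x) (v := b) (w := y')
        rw [show G.dist x b = G.dist b x from SimpleGraph.dist_comm] at h3
        omega
    have hle : (⨅ p : {p : G.Walk x y' // ∀ z ∈ p.support,
        δ * (↑(min (G.dist b x) (G.dist b y')) : ℝ) - γ < (G.dist b z : ℝ)},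
        (p.1.length : ℝ≥0∞)) ≤ graphDivergence G γ δ (2 * m) := by
      unfold graphDivergence
      exact le_iSup_of_le x (le_iSup_of_le y' (le_iSup_of_le b (le_iSup_of_le hr le_rfl)))
    set fm : ℝ := f (Int.toNat ⌊δ * (m : ℝ) - γ⌋) with hfm
    have hc0 : ENNReal.ofReal fm ≠ 0 := (ENNReal.ofReal_pos.mpr (hpos _)).ne'
    have hct : ENNReal.ofReal fm ≠ ⊤ := ENNReal.ofReal_ne_top
    have hlt : (⨅ p : {p : G.Walk x y' // ∀ z ∈ p.support,
        δ * (↑(min (G.dist b x) (G.dist b y')) : ℝ) - γ < (G.dist b z : ℝ)},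
        (p.1.length : ℝ≥0∞)) < ENNReal.ofReal (ε / 2) / ENNReal.ofReal fm := by
      rw [ENNReal.lt_div_iff_mul_lt (Or.inl hc0) (Or.inl hct)]
      calc _ ≤ graphDivergence G γ δ (2 * m) * ENNReal.ofReal fm := mul_le_mul_left hle _
        _ < _ := hN1 m hm1
    obtain ⟨p, hp⟩ := iInf_lt_iff.mp hlt
    have hplen : (p.1.length : ℝ) * fm < ε / 2 := by
      rw [ENNReal.lt_div_iff_mul_lt (Or.inl hc0) (Or.inl hct)] at hp
      rw [← ENNReal.ofReal_natCast, ← ENNReal.ofReal_mul (by positivity)] at hp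
      exact (ENNReal.ofReal_lt_ofReal_iff (half_pos hε)).mp hp
    have hbound : ∀ r ∈ p.1.darts.map (edgeFloydLength G f b), r ≤ fm := by
      intro r hr'
      obtain ⟨d, hd, rfl⟩ := List.mem_map.mp hr'
      have h1 := p.2 d.toProd.1 (SimpleGraph.Walk.dart_fst_mem_support_of_mem_darts _ hd)
      have h2 := p.2 d.toProd.2 (SimpleGraph.Walk.dart_snd_mem_support_of_mem_darts _ hd)
      rw [hmin] at h1 h2
      apply hmono
      have key2 : ∀ j : ℕ, δ * (m : ℝ) - γ < j → Int.toNat ⌊δ * (m : ℝ) - γ⌋ ≤ j := by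
        intro j hj
        refine Int.toNat_le.mpr ?_
        have h4 := Int.floor_le_floor hj.le
        simpa using h4
      exact le_min (key2 _ h1) (key2 _ h2)
    have hfl : floydLength G f b p.1 ≤ (p.1.length : ℝ) * fm := by
      have h5 := List.sum_le_card_nsmul _ fm hbound
      rwa [List.length_map, SimpleGraph.Walk.length_darts, nsmul_eq_mul] at h5
    have htot := floydDist_le_floydLength hpos b (p.1.append w)
    rw [floydLength_append] at htot
    have hfl' : floydLength G f b p.1 < ε / 2 := lt_of_le_of_lt hfl hplen
    calc floydDist G f b x y ≤ floydLength G f b p.1 + floydLength G f b w := htot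
      _ < ε / 2 + ε / 2 := by linarith
      _ = ε := by ring
  intro x y hx hy
  rcases le_total (G.dist b x) (G.dist b y) with h | h
  · exact key x y hx hy h
  · rw [floydDist_comm]; exact key y x hy hx h


end FloydPaper
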